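/- Singular value bound for the orthogonal-restriction cocycle: let A be an invertible (d+1)×(d+1) real matrix, x ∈ Δ, and suppose ι(y) := ι(x)·A^{−1}·(normalization) has all coordinates in [0,1] after the leading 1 (i.e., y ∈ Δ). Let D = Π·A·H(x). Then δ_2(A) ≤ C · δ_1(D), where δ_i denotes the i-th largest singular value and C > 0 is a constant depending only on d (not on A or x). -/

import Mathlib

open Matrix

/-- `ι x = (1, x_1, …, x_d)` as a row vector. -/
def iota {d : ℕ} (x : Fin d → ℝ) : Fin (d + 1) → ℝ := Fin.cases 1 x

/-- `H(x)`: the `(d+1) × d` matrix with first row `-x` and remaining rows the identity. -/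
def Hmat {d : ℕ} (x : Fin d → ℝ) : Matrix (Fin (d + 1)) (Fin d) ℝ :=
  Matrix.of (Fin.cases (fun j => -x j) (fun i j => if i = j then 1 else 0))

/-- `Π`: the `d × (d+1)` matrix deleting the first coordinate. -/
def Pmat (d : ℕ) : Matrix (Fin d) (Fin (d + 1)) ℝ :=
  Matrix.of fun i j => if j = i.succ then 1 else 0

/-- Membership in `Δ = {x : 1 ≥ x_1 ≥ … ≥ x_d ≥ 0}`. -/
def memDelta {d : ℕ} (x : Fin d → ℝ) : Prop :=
  (∀ i, 0 ≤ x i) ∧ (∀ i, x i ≤ 1) ∧ ∀ i j : Fin d, i ≤ j → x j ≤ x i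

/-- Euclidean (ℓ²) operator norm of a real matrix; this is its largest singular value. -/
noncomputable def opN {m n : Type*} [Fintype m] [Fintype n] [DecidableEq m] [DecidableEq n]
    (A : Matrix m n ℝ) : ℝ :=
  ‖LinearMap.toContinuousLinearMap (Matrix.toEuclideanLin A)‖

/-- The second largest singular value of a square real matrix, characterized as the
distance (in the ℓ² operator norm) to the set of matrices of rank at most `1`. -/
noncomputable def delta2 {m : Type*} [Fintype m] [DecidableEq m]
    (A : Matrix m m ℝ) : ℝ :=
  sInf {r : ℝ | ∃ B : Matrix m m ℝ, B.rank ≤ 1 ∧ r = opN (A - B)}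

/-! With `e₀` the first basis vector, `B = A e₀ ι(x)ᵀ` has rank one and `A - B = A H(x) Π`,
because `H(x) Π = 1 - e₀ ι(x)ᵀ`. Since `ι(y)ᵀ A` is a multiple of `ι(x)ᵀ`, which annihilates
`H(x)`, the columns of `A H(x)` lie in `ι(y)^⊥`, where `H(y) Π` acts as the identity. Hence
`A - B = H(y) (Π A H(x)) Π`, and `δ₂(A) ≤ ‖A - B‖ ≤ ‖H(y)‖ ‖Π A H(x)‖ ‖Π‖`, with `‖Π‖ ≤ 1` and
`‖H(y)‖² ≤ 1 + |y|² ≤ d + 1` by Cauchy–Schwarz. -/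

open scoped Matrix.Norms.L2Operator

lemma opN_eq_norm {m n : Type*} [Fintype m] [Fintype n] [DecidableEq m] [DecidableEq n]
    (A : Matrix m n ℝ) : opN A = ‖A‖ := rfl

lemma delta2_le_opN_sub {m : Type*} [Fintype m] [DecidableEq m] (A : Matrix m m ℝ)
    {B : Matrix m m ℝ} (hB : B.rank ≤ 1) : delta2 A ≤ opN (A - B) :=
  csInf_le ⟨0, fun _ ⟨_, _, hr⟩ => hr ▸ norm_nonneg _⟩ ⟨B, hB, rfl⟩

lemma Matrix.l2_opNorm_le_of_forall {m n : Type*} [Fintype m] [Fintype n] [DecidableEq n]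
    (A : Matrix m n ℝ) {K : ℝ} (hK : 0 ≤ K)
    (h : ∀ x : EuclideanSpace ℝ n, ‖(EuclideanSpace.equiv m ℝ).symm (A *ᵥ x)‖ ≤ K * ‖x‖) :
    ‖A‖ ≤ K :=
  ContinuousLinearMap.opNorm_le_bound _ hK h

lemma Pmat_mulVec {d : ℕ} (z : Fin (d + 1) → ℝ) : Pmat d *ᵥ z = fun i => z i.succ := by
  funext i
  simp [Pmat, mulVec, dotProduct]

lemma Hmat_mulVec {d : ℕ} (y w : Fin d → ℝ) :
    Hmat y *ᵥ w = Fin.cases (-(y ⬝ᵥ w)) w := by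
  funext i
  cases i using Fin.cases <;> simp [Hmat, mulVec, dotProduct]

lemma norm_Pmat_le_one (d : ℕ) : ‖Pmat d‖ ≤ 1 := by
  refine (Pmat d).l2_opNorm_le_of_forall zero_le_one fun z => ?_
  rw [one_mul, EuclideanSpace.norm_eq, EuclideanSpace.norm_eq, Pmat_mulVec]
  refine Real.sqrt_le_sqrt ?_
  simp [Fin.sum_univ_succ (n := d), sq_nonneg]

lemma norm_Hmat_le {d : ℕ} (y : Fin d → ℝ) : ‖Hmat y‖ ≤ √(1 + y ⬝ᵥ y) := by
  refine (Hmat y).l2_opNorm_le_of_forall (Real.sqrt_nonneg _) fun w => ?_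
  rw [EuclideanSpace.norm_eq, EuclideanSpace.norm_eq, Hmat_mulVec,
    ← Real.sqrt_mul' _ (by positivity)]
  refine Real.sqrt_le_sqrt ?_
  have cauchySchwarz : (y ⬝ᵥ w.ofLp) ^ 2 ≤ (y ⬝ᵥ y) * ∑ i, w i ^ 2 := by
    simpa only [dotProduct, ← sq] using Finset.sum_mul_sq_le_sq_mul_sq Finset.univ y w.ofLp
  simp only [PiLp.continuousLinearEquiv_symm_apply, Real.norm_eq_abs, sq_abs, Fin.sum_univ_succ,
    Fin.cases_zero, Fin.cases_succ, neg_sq]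
  linarith

lemma Hmat_mul_Pmat {d : ℕ} (v : Fin d → ℝ) :
    Hmat v * Pmat d = 1 - vecMulVec (Pi.single 0 1) (iota v) := by
  ext i j
  cases i using Fin.cases <;> cases j using Fin.cases <;>
    simp [Hmat, Pmat, iota, Matrix.mul_apply, vecMulVec_apply, Matrix.one_apply,
      (Fin.succ_ne_zero _).symm]

lemma Hmat_mul_Pmat_mul_of_iota_vecMul_eq_zero {d n : ℕ} {v : Fin d → ℝ}
    {M : Matrix (Fin (d + 1)) (Fin n) ℝ} (h : iota v ᵥ* M = 0) : Hmat v * Pmat d * M = M := by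
  rw [Hmat_mul_Pmat, Matrix.sub_mul, Matrix.one_mul, vecMulVec_mul, h, sub_eq_self]
  ext
  simp [vecMulVec_apply]

lemma iota_vecMul_Hmat {d : ℕ} (x : Fin d → ℝ) : iota x ᵥ* Hmat x = 0 := by
  funext j
  simp [vecMul, dotProduct, Fin.sum_univ_succ, iota, Hmat]

lemma mul_Hmat_mul_Pmat_eq {d : ℕ} {A : Matrix (Fin (d + 1)) (Fin (d + 1)) ℝ}
    {x y : Fin d → ℝ} {c : ℝ} (hyA : iota y ᵥ* A = c • iota x) :
    A * (Hmat x * Pmat d) = Hmat y * (Pmat d * A * Hmat x) * Pmat d := by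
  have hyAH : iota y ᵥ* (A * Hmat x * Pmat d) = 0 := by
    rw [← vecMul_vecMul, ← vecMul_vecMul, hyA, smul_vecMul, iota_vecMul_Hmat, smul_zero,
      zero_vecMul]
  rw [← Matrix.mul_assoc, ← Hmat_mul_Pmat_mul_of_iota_vecMul_eq_zero hyAH]
  simp only [Matrix.mul_assoc]

lemma dotProduct_self_le_of_memDelta {d : ℕ} {y : Fin d → ℝ} (hy : memDelta y) :
    y ⬝ᵥ y ≤ d :=
  calc y ⬝ᵥ y ≤ ∑ _i : Fin d, (1 : ℝ) :=
        Finset.sum_le_sum fun i _ => mul_le_one₀ (hy.2.1 i) (hy.1 i) (hy.2.1 i)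
    _ = d := by simp

/-- Singular value bound for the orthogonal-restriction cocycle: if `A` is invertible,
`x ∈ Δ`, and `ι(x)·A⁻¹` is a positive multiple of `ι(y)` with `y ∈ Δ`, then
`δ₂(A) ≤ C·δ₁(Π·A·H(x))` for a constant `C > 0` depending only on `d`. -/
theorem stmt9 {d : ℕ} :
    ∃ C : ℝ, 0 < C ∧ ∀ A : Matrix (Fin (d + 1)) (Fin (d + 1)) ℝ, IsUnit A.det →
      ∀ x y : Fin d → ℝ, memDelta x → memDelta y →
      (∃ c : ℝ, 0 < c ∧ iota y = c • (iota x ᵥ* A⁻¹)) →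
      delta2 A ≤ C * opN (Pmat d * A * Hmat x) := by
  refine ⟨√(d + 1), by positivity, ?_⟩
  rintro A hA x y - hy ⟨c, -, hyx⟩
  have hyA : iota y ᵥ* A = c • iota x := by
    rw [hyx, smul_vecMul, vecMul_vecMul, nonsing_inv_mul A hA, vecMul_one]
  have hfactor : A - A * vecMulVec (Pi.single 0 1) (iota x) =
      Hmat y * (Pmat d * A * Hmat x) * Pmat d := by
    rw [← mul_Hmat_mul_Pmat_eq hyA, Hmat_mul_Pmat, Matrix.mul_sub, Matrix.mul_one]
  calc delta2 A ≤ opN (A - A * vecMulVec (Pi.single 0 1) (iota x)) :=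
        delta2_le_opN_sub A ((rank_mul_le_right _ _).trans (rank_vecMulVec_le _ _))
    _ ≤ ‖Hmat y‖ * ‖Pmat d * A * Hmat x‖ * ‖Pmat d‖ := by
        rw [opN_eq_norm, hfactor]
        exact (l2_opNorm_mul _ _).trans
          (mul_le_mul_of_nonneg_right (l2_opNorm_mul _ _) (norm_nonneg _))
    _ ≤ √(1 + y ⬝ᵥ y) * ‖Pmat d * A * Hmat x‖ * 1 := by
        gcongr
        exacts [norm_Hmat_le y, norm_Pmat_le_one d]
    _ ≤ √(d + 1) * opN (Pmat d * A * Hmat x) := by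
        rw [mul_one, opN_eq_norm, add_comm]
        gcongr
        exact dotProduct_self_le_of_memDelta hy
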